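/- arXiv:1407.5713 — 3 statements merged into one kernel-verified Lean document; each statement's English description precedes it below -/
import Mathlib

section
/- Let K = ℚ(√(-n)) with n a square-free positive integer, -n ≡ 2 or 3 mod 4, θ = √(-n), and N ≥ 2 an integer. For any integer s with s not divisible by N, the quotient g_{(0, s/N)}(θ) / g_{(0, 1/N)}(θ) of Siegel function values is a real number. -/
/-- The Siegel function. -/
noncomputable def siegel (τ : ℂ) (r₁ r₂ : ℝ) : ℂ :=
  -Complex.exp (Real.pi * Complex.I * τ * ((r₁ : ℂ) ^ 2 - (r₁ : ℂ) + 1 / 6)) *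
    Complex.exp (Real.pi * Complex.I * (r₂ : ℂ) * ((r₁ : ℂ) - 1)) *
    (1 - Complex.exp (2 * Real.pi * Complex.I * ((r₁ : ℂ) * τ + (r₂ : ℂ)))) *
    ∏' n : ℕ,
      ((1 - Complex.exp (2 * Real.pi * Complex.I * τ) ^ (n + 1) *
          Complex.exp (2 * Real.pi * Complex.I * ((r₁ : ℂ) * τ + (r₂ : ℂ)))) *
        (1 - Complex.exp (2 * Real.pi * Complex.I * τ) ^ (n + 1) *
          (Complex.exp (2 * Real.pi * Complex.I * ((r₁ : ℂ) * τ + (r₂ : ℂ))))⁻¹))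

/-! Complex conjugation sends `g_{(r₁, r₂)}(τ)` to `g_{(r₁, -r₂)}(-τ̄)`, and `g_{(0, -r)} = -g_{(0, r)}`.
For purely imaginary `τ` we have `-τ̄ = τ`, so every `g_{(0, r)}(τ)` is purely imaginary and the
quotient of two of them is real. -/

open Complex ComplexConjugate

theorem Complex.conj_tprod {ι : Type*} (f : ι → ℂ) : conj (∏' i, f i) = ∏' i, conj (f i) :=
  Function.LeftInverse.map_tprod f continuous_conj continuous_conj conj_conj

theorem conj_siegel (τ : ℂ) (r₁ r₂ : ℝ) :
    conj (siegel τ r₁ r₂) = siegel (-conj τ) r₁ (-r₂) := by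
  simp only [siegel, map_mul, map_neg, map_sub, map_one, conj_tprod, map_pow, map_inv₀,
    ← exp_conj, map_add, map_div₀, map_ofNat, conj_ofReal, conj_I]
  push_cast
  ring_nf

theorem siegel_zero_left (τ : ℂ) (r : ℝ) :
    siegel τ 0 r = -exp (Real.pi * I * τ / 6) * (exp (Real.pi * I * r))⁻¹ *
      (1 - exp (Real.pi * I * r) ^ 2) *
      ∏' m : ℕ, ((1 - exp (2 * Real.pi * I * τ) ^ (m + 1) * exp (Real.pi * I * r) ^ 2) *
        (1 - exp (2 * Real.pi * I * τ) ^ (m + 1) * (exp (Real.pi * I * r) ^ 2)⁻¹)) := by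
  have hsq : exp (2 * Real.pi * I * ((0 : ℝ) * τ + r)) = exp (Real.pi * I * r) ^ 2 := by
    rw [← exp_nat_mul]
    push_cast
    ring_nf
  rw [siegel, hsq, ← exp_neg]
  push_cast
  ring_nf

theorem siegel_zero_neg (τ : ℂ) (r : ℝ) : siegel τ 0 (-r) = -siegel τ 0 r := by
  have he : exp (Real.pi * I * r) ≠ 0 := exp_ne_zero _
  rw [siegel_zero_left, siegel_zero_left, ofReal_neg, mul_neg, exp_neg]
  -- `r ↦ -r` swaps the two factors of each term of the product
  simp_rw [inv_pow, inv_inv, mul_comm (1 - _ * (exp _ ^ 2)⁻¹)]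
  field_simp
  ring

theorem conj_siegel_I_mul_ofReal_zero (x r : ℝ) :
    conj (siegel (I * x) 0 r) = -siegel (I * x) 0 r := by
  rw [conj_siegel, ← siegel_zero_neg]
  simp

theorem im_siegel_div_siegel_I_mul_ofReal (x r r' : ℝ) :
    (siegel (I * x) 0 r / siegel (I * x) 0 r').im = 0 := by
  rw [← conj_eq_iff_im, map_div₀, conj_siegel_I_mul_ofReal_zero, conj_siegel_I_mul_ofReal_zero,
    neg_div_neg_eq]

theorem stmt_4_general (n : ℕ) (N : ℕ) (s : ℤ) :
    (siegel (Complex.I * (Real.sqrt n : ℂ)) 0 ((s : ℝ) / N) /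
      siegel (Complex.I * (Real.sqrt n : ℂ)) 0 (1 / N)).im = 0 :=
  im_siegel_div_siegel_I_mul_ofReal _ _ _

/-- For `K = ℚ(√-n)` with `n` squarefree, `-n ≡ 2, 3 (mod 4)`, `θ = √-n = i√n`,
`N ≥ 2` and `s` not divisible by `N`, the quotient
`g_{(0, s/N)}(θ) / g_{(0, 1/N)}(θ)` is a real number. -/
theorem stmt_4 (n : ℕ) (hn : 0 < n) (hsq : Squarefree n)
    (hmod : n % 4 = 1 ∨ n % 4 = 2) (N : ℕ) (hN : 2 ≤ N)
    (s : ℤ) (hs : ¬ (N : ℤ) ∣ s) :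
    (siegel (Complex.I * (Real.sqrt n : ℂ)) 0 ((s : ℝ) / N) /
      siegel (Complex.I * (Real.sqrt n : ℂ)) 0 (1 / N)).im = 0 :=
  stmt_4_general n N s
end

section
/- Let θ be purely imaginary with positive imaginary part, N ≥ 2 an integer, and t ∈ ℤ. Then i·e^{tπi/(2N)} · g_{(1/2, t/N)}(θ) / g_{(0, 1/N)}(θ) is a real number, where g denotes the Siegel function. -/
open Complex ComplexConjugate

noncomputable def siegelProd (q w : ℂ) : ℂ :=
  (1 - w) * ∏' n : ℕ, (1 - q ^ (n + 1) * w) * (1 - q ^ (n + 1) * w⁻¹)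

lemma siegel_eq_siegelProd (τ : ℂ) (r₁ r₂ : ℝ) :
    siegel τ r₁ r₂ =
      -(cexp (Real.pi * I * τ * ((r₁ : ℂ) ^ 2 - r₁ + 1 / 6)) * cexp (Real.pi * I * r₂ * (r₁ - 1))) *
        siegelProd (cexp (2 * Real.pi * I * τ)) (cexp (2 * Real.pi * I * (r₁ * τ + r₂))) := by
  simp only [siegel, siegelProd]
  ring

lemma multipliable_one_sub_pow_succ_mul {q : ℂ} (hq : ‖q‖ < 1) (a : ℂ) :
    Multipliable fun n : ℕ => 1 - q ^ (n + 1) * a := by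
  have hsum : Summable fun n : ℕ => -(q ^ (n + 1) * a) :=
    (((summable_geometric_of_norm_lt_one hq).comp_injective (add_left_injective 1)).mul_right a).neg
  simpa only [sub_eq_add_neg] using Complex.multipliable_one_add_of_summable hsum

lemma siegelProd_inv (q : ℂ) {w : ℂ} (hw : w ≠ 0) : siegelProd q w⁻¹ = -w⁻¹ * siegelProd q w := by
  simp only [siegelProd, inv_inv, mul_comm (1 - _ * w⁻¹)]
  rw [← mul_assoc]
  congr 1
  field_simp
  ring

lemma siegelProd_div {q : ℂ} (hq : ‖q‖ < 1) (hq0 : q ≠ 0) (w : ℂ) :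
    siegelProd q (q / w) = siegelProd q w := by
  have hf : Multipliable fun n : ℕ => 1 - q ^ (n + 1) * w := multipliable_one_sub_pow_succ_mul hq w
  have hf₀ : Multipliable fun n : ℕ => 1 - q ^ n * w :=
    Multipliable.comp_nat_add (k := 1) hf
  have hg : Multipliable fun n : ℕ => 1 - q ^ (n + 1) * w⁻¹ :=
    multipliable_one_sub_pow_succ_mul hq w⁻¹
  have hg₂ : Multipliable fun n : ℕ => 1 - q ^ (n + 1 + 1) * w⁻¹ := by
    simpa only [pow_succ _ (_ + 1), mul_assoc] using multipliable_one_sub_pow_succ_mul hq (q * w⁻¹)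
  have hterm (n : ℕ) : (1 - q ^ (n + 1) * (q / w)) * (1 - q ^ (n + 1) * (q / w)⁻¹) =
      (1 - q ^ (n + 1 + 1) * w⁻¹) * (1 - q ^ n * w) := by
    field_simp
    ring
  calc siegelProd q (q / w)
      = ((1 - q ^ (0 + 1) * w⁻¹) * ∏' n : ℕ, (1 - q ^ (n + 1 + 1) * w⁻¹)) *
          ∏' n : ℕ, (1 - q ^ n * w) := by
        rw [siegelProd, tprod_congr hterm, hg₂.tprod_mul hf₀, zero_add, pow_one, div_eq_mul_inv]
        ring
    _ = siegelProd q w := by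
        rw [← tprod_eq_zero_mul' (f := fun n : ℕ => 1 - q ^ (n + 1) * w⁻¹) hg₂,
          tprod_eq_zero_mul' (f := fun n : ℕ => 1 - q ^ n * w) hf, siegelProd, hf.tprod_mul hg]
        simp only [pow_zero, one_mul]
        ring

lemma conj_siegelProd (q w : ℂ) : conj (siegelProd q w) = siegelProd (conj q) (conj w) := by
  rw [siegelProd, map_mul,
    Function.LeftInverse.map_tprod _ continuous_conj continuous_conj conj_conj]
  simp only [map_sub, map_one, map_mul, map_pow, map_inv₀, siegelProd]

lemma conj_siegelProd_of_conj_eq_div {q w : ℂ} (hq : ‖q‖ < 1) (hq0 : q ≠ 0) (hq_real : conj q = q)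
    (hw : conj w = q / w) : conj (siegelProd q w) = siegelProd q w := by
  rw [conj_siegelProd, hq_real, hw, siegelProd_div hq hq0]

lemma conj_inv_mul_siegelProd_sq {q u : ℂ} (hq_real : conj q = q) (hu : ‖u‖ = 1) :
    conj (u⁻¹ * siegelProd q (u ^ 2)) = -(u⁻¹ * siegelProd q (u ^ 2)) := by
  have hu0 : u ≠ 0 := norm_ne_zero_iff.mp (hu ▸ one_ne_zero)
  rw [map_mul, map_inv₀, conj_siegelProd, hq_real, map_pow, ← inv_eq_conj hu, inv_inv, inv_pow,
    siegelProd_inv q (pow_ne_zero 2 hu0)]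
  field_simp

lemma cexp_two_pi_I_mul_I_mul (y : ℝ) :
    cexp (2 * Real.pi * I * (I * y)) = (Real.exp (-(2 * Real.pi * y)) : ℝ) := by
  rw [ofReal_exp]
  congr 1
  push_cast
  linear_combination (2 * Real.pi * y : ℂ) * I_sq

lemma conj_cexp_half_eq_div (y r : ℝ) :
    conj (cexp (2 * Real.pi * I * (((1 / 2 : ℝ) : ℂ) * (I * y) + r))) =
      (Real.exp (-(2 * Real.pi * y)) : ℝ) /
        cexp (2 * Real.pi * I * (((1 / 2 : ℝ) : ℂ) * (I * y) + r)) := by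
  rw [← cexp_two_pi_I_mul_I_mul, ← exp_conj, ← exp_sub]
  congr 1
  simp only [map_mul, map_add, map_ofNat, conj_ofReal, conj_I]
  push_cast
  ring

lemma I_mul_cexp_mul_siegel_I_mul_half (y : ℝ) (N : ℕ) (t : ℤ) :
    I * cexp (t * Real.pi * I / (2 * N)) * siegel (I * y) (1 / 2) (t / N) =
      -(I * (Real.exp (Real.pi * y / 12) : ℝ)) *
        siegelProd (Real.exp (-(2 * Real.pi * y)) : ℝ)
          (cexp (2 * Real.pi * I * (((1 / 2 : ℝ) : ℂ) * (I * y) + ((t / N : ℝ) : ℂ)))) := by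
  have hmod : cexp (Real.pi * I * (I * y) * (((1 / 2 : ℝ) : ℂ) ^ 2 - ((1 / 2 : ℝ) : ℂ) + 1 / 6)) =
      (Real.exp (Real.pi * y / 12) : ℝ) := by
    rw [ofReal_exp]
    congr 1
    push_cast
    linear_combination (-(Real.pi * y / 12) : ℂ) * I_sq
  have hphase : cexp (t * Real.pi * I / (2 * N)) *
      cexp (Real.pi * I * ((t / N : ℝ) : ℂ) * (((1 / 2 : ℝ) : ℂ) - 1)) = 1 := by
    rw [← exp_add]
    convert exp_zero using 2
    push_cast
    ring
  rw [siegel_eq_siegelProd, cexp_two_pi_I_mul_I_mul, hmod]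
  linear_combination (-(I * (Real.exp (Real.pi * y / 12) : ℝ)) * siegelProd _ _) * hphase

lemma siegel_I_mul_zero_one_div (y : ℝ) (N : ℕ) :
    siegel (I * y) 0 (1 / N) =
      -(Real.exp (-(Real.pi * y / 6)) : ℝ) * ((cexp ((Real.pi / N : ℝ) * I))⁻¹ *
        siegelProd (Real.exp (-(2 * Real.pi * y)) : ℝ) (cexp ((Real.pi / N : ℝ) * I) ^ 2)) := by
  have hmod : cexp (Real.pi * I * (I * y) * (((0 : ℝ) : ℂ) ^ 2 - ((0 : ℝ) : ℂ) + 1 / 6)) =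
      (Real.exp (-(Real.pi * y / 6)) : ℝ) := by
    rw [ofReal_exp]
    congr 1
    push_cast
    linear_combination (Real.pi * y / 6 : ℂ) * I_sq
  have hphase : cexp (Real.pi * I * ((1 / N : ℝ) : ℂ) * (((0 : ℝ) : ℂ) - 1)) =
      (cexp ((Real.pi / N : ℝ) * I))⁻¹ := by
    rw [← exp_neg]
    congr 1
    push_cast
    ring
  have hζ : cexp (2 * Real.pi * I * (((0 : ℝ) : ℂ) * (I * y) + ((1 / N : ℝ) : ℂ))) =
      cexp ((Real.pi / N : ℝ) * I) ^ 2 := by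
    rw [← exp_nat_mul]
    congr 1
    push_cast
    ring
  rw [siegel_eq_siegelProd, cexp_two_pi_I_mul_I_mul, hmod, hphase, hζ]
  ring

theorem stmt_5_general (y : ℝ) (hy : 0 < y) (N : ℕ) (t : ℤ) :
    (Complex.I * Complex.exp ((t : ℂ) * Real.pi * Complex.I / (2 * N)) *
      siegel (Complex.I * (y : ℂ)) (1 / 2) ((t : ℝ) / N) /
      siegel (Complex.I * (y : ℂ)) 0 (1 / N)).im = 0 := by
  set q : ℂ := ((Real.exp (-(2 * Real.pi * y)) : ℝ) : ℂ)
  have hq_norm : ‖q‖ < 1 := by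
    rw [norm_real, Real.norm_of_nonneg (Real.exp_nonneg _), Real.exp_lt_one_iff]
    nlinarith [Real.pi_pos]
  have hq0 : q ≠ 0 := ofReal_ne_zero.mpr (Real.exp_ne_zero _)
  have hq_real : conj q = q := conj_ofReal _
  have hP := conj_siegelProd_of_conj_eq_div hq_norm hq0 hq_real (conj_cexp_half_eq_div y (t / N))
  have hR := conj_inv_mul_siegelProd_sq hq_real (norm_exp_ofReal_mul_I (Real.pi / N))
  rw [I_mul_cexp_mul_siegel_I_mul_half, siegel_I_mul_zero_one_div, ← conj_eq_iff_im]
  generalize siegelProd q _ = P at hP ⊢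
  generalize _ * siegelProd q _ = R at hR ⊢
  simp only [map_div₀, map_mul, map_neg, conj_I, conj_ofReal, hP, hR]
  ring

/-- For `θ = iy` purely imaginary with `y > 0`, `N ≥ 2` and `t ∈ ℤ`, the number
`i · e^{tπi/(2N)} · g_{(1/2, t/N)}(θ) / g_{(0, 1/N)}(θ)` is real. -/
theorem stmt_5 (y : ℝ) (hy : 0 < y) (N : ℕ) (hN : 2 ≤ N) (t : ℤ) :
    (Complex.I * Complex.exp ((t : ℂ) * Real.pi * Complex.I / (2 * N)) *
      siegel (Complex.I * (y : ℂ)) (1 / 2) ((t : ℝ) / N) /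
      siegel (Complex.I * (y : ℂ)) 0 (1 / N)).im = 0 :=
  stmt_5_general y hy N t
end

section
/- Let N ≥ 2 be an integer, K an imaginary quadratic field with ring of integers O_K, p an odd prime with p² dividing N·d_K where d_K is the discriminant, and set β = 1 + (2N/p)√d (if p = 3) or β = 1 + (6N/p)√d (if p ≠ 3), where K = ℚ(√d), d < 0 squarefree (interpreting √d = √(-|d|)). Then β + NO_K has multiplicative order exactly p in (O_K/NO_K)^×. -/
/-!
The elements `1, θ` of `𝓞 K` have discriminant `-4m`, so `d_K ∣ 4m` and hence `p² ∣ 4Nm`.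
Write `β = 1 + cθ` with `c = kN/p`, `k ∈ {2, 6}` prime to `p`. Modulo `N` the element `x = cθ`
satisfies `x² = -c²m ≡ 0`, because `p²c²m = k²N²m` and `4 ∣ k²`, and `p x = kNθ ≡ 0`; hence
`(1 + x)^p = 1 + p x = 1`. Finally `x ≢ 0`: otherwise `kθ = pγ`, so `p ∣ θ` and taking norms
`p² ∣ m`, against squarefreeness.
-/

open NumberField Module Matrix

section SquareZero

variable {R : Type*} [CommRing R] {x : R}

theorem one_add_pow_of_mul_self_eq_zero (hx : x * x = 0) (n : ℕ) :
    (1 + x) ^ n = 1 + n * x := by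
  induction n with
  | zero => simp
  | succ n ih =>
    rw [pow_succ, ih, Nat.cast_succ]
    linear_combination (n : R) * hx

theorem orderOf_one_add_of_mul_self_eq_zero {p : ℕ} [Fact p.Prime] (hx : x * x = 0)
    (hpx : (p : R) * x = 0) (hx0 : x ≠ 0) : orderOf (1 + x) = p :=
  orderOf_eq_prime (by rw [one_add_pow_of_mul_self_eq_zero hx, hpx, add_zero])
    (by simpa using hx0)

end SquareZero

theorem dvd_sq_mul_of_mul_eq_mul {c p k N m : ℕ} (hp : p ≠ 0) (hcp : c * p = k * N)
    (hk : 4 ∣ k ^ 2) (h : p ^ 2 ∣ 4 * N * m) : N ∣ c ^ 2 * m := by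
  obtain ⟨j, hj⟩ := hk
  obtain ⟨t, ht⟩ := h
  refine ⟨j * t, Nat.eq_of_mul_eq_mul_right (pow_pos (Nat.pos_of_ne_zero hp) 2) ?_⟩
  calc c ^ 2 * m * p ^ 2 = (c * p) ^ 2 * m := by ring
    _ = j * N * (4 * N * m) := by rw [hcp, mul_pow, hj]; ring
    _ = N * (j * t) * p ^ 2 := by rw [ht]; ring

theorem natCast_dvd_of_natCast_dvd_mul {R : Type*} [CommRing R] [IsDomain R] [CharZero R]
    {c p k N : ℕ} (hN : N ≠ 0) (hcp : c * p = k * N) (hpk : p.Coprime k) {θ : R}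
    (h : (N : R) ∣ c * θ) : (p : R) ∣ θ := by
  obtain ⟨γ, hγ⟩ := h
  have hcpR : (c : R) * p = k * N := by exact_mod_cast hcp
  have hkθ : (k : R) * θ = p * γ :=
    mul_left_cancel₀ (Nat.cast_ne_zero.2 hN) (by linear_combination (-θ) * hcpR + p * hγ)
  obtain ⟨u, v, huv⟩ := Nat.isCoprime_iff_coprime.2 hpk
  have huvR : (u : R) * p + v * k = 1 := by exact_mod_cast congrArg (Int.cast : ℤ → R) huv
  exact ⟨u * θ + v * γ, by linear_combination (-θ) * huvR + v * hkθ⟩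

theorem dvd_of_algebraMap_dvd_algebraMap {R S : Type*} [CommRing R] [IsDomain R]
    [IsIntegrallyClosed R] [CommRing S] [Nontrivial S] [Algebra R S] [Module.Free R S]
    [Module.Finite R S] {a b : R} (h : algebraMap R S a ∣ algebraMap R S b) : a ∣ b := by
  have := map_dvd (Algebra.norm R) h
  rwa [Algebra.norm_algebraMap, Algebra.norm_algebraMap,
    IsIntegrallyClosed.pow_dvd_pow_iff Module.finrank_pos.ne'] at this

theorem notMem_range_algebraMap_of_sq_eq_neg {F L : Type*} [Field F] [LinearOrder F]
    [IsStrictOrderedRing F] [Field L] [Algebra F L] {ϑ : L} {m : ℕ} (hm : m ≠ 0)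
    (h : ϑ ^ 2 = -(m : L)) : ϑ ∉ Set.range (algebraMap F L) := by
  rintro ⟨q, rfl⟩
  have hq : q ^ 2 = -(m : F) := (algebraMap F L).injective (by simpa using h)
  have : (0 : F) < m := by positivity
  nlinarith [sq_nonneg q]

section SquareRoot

variable {F K : Type*} [Field F] [Field K] [Algebra F K] {ϑ : K}

theorem linearIndependent_one_of_notMem_range (hϑ : ϑ ∉ Set.range (algebraMap F K)) :
    LinearIndependent F ![1, ϑ] := by
  refine (LinearIndependent.pair_iff' one_ne_zero).2 fun a ha ↦ hϑ ⟨a, ?_⟩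
  rwa [Algebra.algebraMap_eq_smul_one]

variable (h2 : finrank F K = 2) (hϑ : ϑ ∉ Set.range (algebraMap F K)) {a : F}
  (ha : ϑ ^ 2 = algebraMap F K a)
include h2 hϑ ha

theorem trace_eq_zero_of_sq_eq_algebraMap : Algebra.trace F K ϑ = 0 := by
  let b : Basis (Fin 2) F K :=
    basisOfLinearIndependentOfCardEqFinrank (linearIndependent_one_of_notMem_range hϑ)
      (by simp [h2])
  have hb : ⇑b = ![1, ϑ] := coe_basisOfLinearIndependentOfCardEqFinrank _ _
  have hb0 : b 0 = 1 := by simp [hb]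
  have hb1 : b 1 = ϑ := by simp [hb]
  rw [Algebra.trace_eq_matrix_trace b, Matrix.trace_fin_two, Algebra.leftMulMatrix_eq_repr_mul,
    Algebra.leftMulMatrix_eq_repr_mul, hb0, hb1, mul_one, ← sq, ha,
    Algebra.algebraMap_eq_smul_one, ← hb0, ← hb1]
  simp

theorem discr_one_of_sq_eq_algebraMap : Algebra.discr F ![1, ϑ] = 4 * a := by
  have htr := trace_eq_zero_of_sq_eq_algebraMap h2 hϑ ha
  have htr_one : Algebra.trace F K 1 = 2 := by
    rw [← map_one (algebraMap F K), Algebra.trace_algebraMap, h2, two_smul, one_add_one_eq_two]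
  rw [Algebra.discr_def, Matrix.det_fin_two]
  simp only [Algebra.traceMatrix_apply, Algebra.traceForm_apply, Matrix.cons_val_zero,
    Matrix.cons_val_one, one_mul, mul_one]
  rw [← sq, ha, htr, htr_one, Algebra.trace_algebraMap, h2, nsmul_eq_mul]
  ring

end SquareRoot

theorem Algebra.coe_discr_int {K : Type*} [Field K] [NumberField K] {ι : Type*} [Fintype ι]
    [DecidableEq ι] (v : ι → 𝓞 K) :
    (Algebra.discr ℤ v : ℚ) = Algebra.discr ℚ (fun i ↦ (v i : K)) := by
  rw [Algebra.discr_def, Algebra.discr_def, ← eq_intCast (Int.castRingHom ℚ), RingHom.map_det]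
  congr 1
  ext i j
  simp [Algebra.traceMatrix_apply, Algebra.traceForm_apply, Algebra.coe_trace_int]

namespace NumberField

variable {K : Type*} [Field K] [NumberField K]

theorem discr_dvd_algebraDiscr {ι : Type*} [Fintype ι] [DecidableEq ι]
    (hcard : Fintype.card ι = finrank ℚ K) (v : ι → 𝓞 K) :
    discr K ∣ Algebra.discr ℤ v := by
  have hcard' : Fintype.card (Free.ChooseBasisIndex ℤ (𝓞 K)) = Fintype.card ι := by
    rw [← finrank_eq_card_chooseBasisIndex, RingOfIntegers.rank, hcard]
  let b : Basis ι ℤ (𝓞 K) := (RingOfIntegers.basis K).reindex (Fintype.equivOfCardEq hcard')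
  have hv : v = ⇑b ᵥ* (b.toMatrix v).map (algebraMap ℤ (𝓞 K)) := by
    funext j
    simp only [vecMul, dotProduct, map_apply, mul_comm (b _), ← Algebra.smul_def]
    exact (b.sum_toMatrix_smul_self v j).symm
  rw [hv, Algebra.discr_of_matrix_vecMul, discr_eq_discr K b]
  exact dvd_mul_left _ _

theorem discr_dvd_four_mul_of_sq_eq_neg (h2 : finrank ℚ K = 2) {m : ℕ} (hm : m ≠ 0)
    {θ : 𝓞 K} (hθ : θ ^ 2 = -(m : 𝓞 K)) : discr K ∣ 4 * m := by
  have hϑ : (θ : K) ^ 2 = algebraMap ℚ K (-m) := by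
    rw [← map_pow, hθ]
    simp
  have hdiscr : Algebra.discr ℤ ![1, θ] = -(4 * m) := by
    apply Int.cast_injective (α := ℚ)
    have hv : (fun i ↦ ((![1, θ] i : 𝓞 K) : K)) = ![1, (θ : K)] := by
      ext i
      fin_cases i <;> rfl
    rw [Algebra.coe_discr_int, hv, discr_one_of_sq_eq_algebraMap h2
      (notMem_range_algebraMap_of_sq_eq_neg hm (by simpa using hϑ)) hϑ]
    push_cast
    ring
  exact dvd_neg.1 (hdiscr ▸ discr_dvd_algebraDiscr (by simp [h2]) ![1, θ])

end NumberField

section SquareRootOfNeg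

variable {S : Type*} [CommRing S] {m : ℕ} {θ : S}

theorem sq_dvd_of_natCast_dvd_of_sq_eq_neg [Nontrivial S] [Module.Free ℤ S] [Module.Finite ℤ S]
    (hθ : θ ^ 2 = -(m : S)) {p : ℕ} (hp : (p : S) ∣ θ) : p ^ 2 ∣ m := by
  obtain ⟨δ, rfl⟩ := hp
  have : algebraMap ℤ S (p ^ 2) ∣ algebraMap ℤ S m :=
    ⟨-δ ^ 2, by simp only [eq_intCast, Int.cast_pow, Int.cast_natCast]; linear_combination hθ⟩
  exact_mod_cast dvd_of_algebraMap_dvd_algebraMap this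

theorem orderOf_mk_one_add_mul_of_sq_eq_neg [IsDomain S] [CharZero S] [Module.Free ℤ S]
    [Module.Finite ℤ S] (hsq : Squarefree m) (hθ : θ ^ 2 = -(m : S))
    {N p k : ℕ} (hN : N ≠ 0) (hp : p.Prime) (hpN : p ∣ N) (hk : 4 ∣ k ^ 2) (hpk : ¬p ∣ k)
    (hdvd : p ^ 2 ∣ 4 * N * m) :
    orderOf (Ideal.Quotient.mk (Ideal.span {(N : S)}) (1 + ((k * N / p : ℕ) : S) * θ)) = p := by
  have := Fact.mk hp
  set c := k * N / p
  have hcp : c * p = k * N := Nat.div_mul_cancel (dvd_mul_of_dvd_right hpN k)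
  have hmk (a : S) : Ideal.Quotient.mk (Ideal.span {(N : S)}) a = 0 ↔ (N : S) ∣ a :=
    Ideal.Quotient.eq_zero_iff_mem.trans Ideal.mem_span_singleton
  rw [map_add, map_one]
  apply orderOf_one_add_of_mul_self_eq_zero
  · rw [← map_mul, hmk]
    have hNc : (N : S) ∣ ((c ^ 2 * m : ℕ) : S) :=
      Nat.cast_dvd_cast (dvd_sq_mul_of_mul_eq_mul hp.ne_zero hcp hk hdvd)
    refine (dvd_neg.2 hNc).trans (dvd_of_eq ?_)
    push_cast
    linear_combination -(c : S) ^ 2 * hθ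
  · rw [← map_natCast (Ideal.Quotient.mk _) p, ← map_mul, hmk]
    refine ⟨k * θ, ?_⟩
    rw [← mul_assoc, ← Nat.cast_mul, mul_comm p c, hcp]
    push_cast
    ring
  · rw [Ne, hmk]
    intro hNθ
    have hpθ := natCast_dvd_of_natCast_dvd_mul hN hcp (hp.coprime_iff_not_dvd.2 hpk) hNθ
    exact hp.one_lt.ne' (Nat.isUnit_iff.1 (hsq p (by
      simpa [sq] using sq_dvd_of_natCast_dvd_of_sq_eq_neg hθ hpθ)))

end SquareRootOfNeg

theorem stmt_13_general (m : ℕ) (hsq : Squarefree m)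
    (K : Type*) [Field K] [NumberField K] (h2 : Module.finrank ℚ K = 2)
    (θ : 𝓞 K) (hθ : (θ : K) ^ 2 = -(m : K))
    (N : ℕ) (hN : 2 ≤ N) (p : ℕ) (hp : p.Prime) (hodd : Odd p) (hpN : p ∣ N)
    (hdisc : (p : ℤ) ^ 2 ∣ (N : ℤ) * NumberField.discr K)
    (β : 𝓞 K) (hβ : β = 1 + (((if p = 3 then 2 * N / p else 6 * N / p) : ℕ) : 𝓞 K) * θ) :
    orderOf (Ideal.Quotient.mk (Ideal.span {(N : 𝓞 K)}) β) = p := by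
  have hθ' : θ ^ 2 = -(m : 𝓞 K) := RingOfIntegers.coe_injective (by simpa using hθ)
  have hdvd : p ^ 2 ∣ 4 * N * m := by
    have h := hdisc.trans (mul_dvd_mul_left _ (discr_dvd_four_mul_of_sq_eq_neg h2 hsq.ne_zero hθ'))
    rw [← mul_assoc, mul_comm (N : ℤ) 4] at h
    exact_mod_cast h
  have hp2 : ¬p ∣ 2 := fun h ↦ by
    rw [(Nat.prime_dvd_prime_iff_eq hp Nat.prime_two).1 h] at hodd
    exact absurd hodd (by decide)
  subst hβ
  split_ifs with hp3
  · exact orderOf_mk_one_add_mul_of_sq_eq_neg hsq hθ' (by omega) hp hpN (by norm_num) hp2 hdvd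
  · refine orderOf_mk_one_add_mul_of_sq_eq_neg hsq hθ' (by omega) hp hpN (by norm_num) ?_ hdvd
    intro h6
    rcases hp.dvd_mul.1 (show p ∣ 2 * 3 from h6) with h | h
    · exact hp2 h
    · exact hp3 ((Nat.prime_dvd_prime_iff_eq hp Nat.prime_three).1 h)

/-- Let `K = ℚ(√-m)` be imaginary quadratic, `N ≥ 2`, `p` an odd prime with `p ∣ N` and
`p² ∣ N·d_K`, and `β = 1 + (2N/p)√-m` if `p = 3`, `β = 1 + (6N/p)√-m` if `p ≠ 3`.
Then `β` has multiplicative order exactly `p` in `𝓞 K ⧸ N 𝓞 K`. -/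
theorem stmt_13 (m : ℕ) (hm : 0 < m) (hsq : Squarefree m)
    (K : Type*) [Field K] [NumberField K] (h2 : Module.finrank ℚ K = 2)
    (θ : 𝓞 K) (hθ : (θ : K) ^ 2 = -(m : K))
    (N : ℕ) (hN : 2 ≤ N) (p : ℕ) (hp : p.Prime) (hodd : Odd p) (hpN : p ∣ N)
    (hdisc : (p : ℤ) ^ 2 ∣ (N : ℤ) * NumberField.discr K)
    (β : 𝓞 K) (hβ : β = 1 + (((if p = 3 then 2 * N / p else 6 * N / p) : ℕ) : 𝓞 K) * θ) :
    orderOf (Ideal.Quotient.mk (Ideal.span {(N : 𝓞 K)}) β) = p :=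
  stmt_13_general m hsq K h2 θ hθ N hN p hp hodd hpN hdisc β hβ
end
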